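/- arXiv:math/0610823 — 2 statements merged into one kernel-verified Lean document; each statement's English description precedes it below -/
import Mathlib

section
/- Let m ∈ ℕ, (i_1, …, i_m) ∈ N^m and a ∈ A; set b := i_1⋯i_m ▷ a and let w be the σ-composite of the word (i_2, …, i_m) at a. If α_{i_1,i_1▷b} ∈ w(R⁺_a), then σ_{i_1,i_1▷b}(w(R⁺_a)) ∩ (−R⁺_b) = σ_{i_1,i_1▷b}( w(R⁺_a) ∩ (−R⁺_{i_1▷b}) ) ∪ {−α_{i_1,b}}; otherwise (that is, −α_{i_1,i_1▷b} ∈ w(R⁺_a)), σ_{i_1,i_1▷b}(w(R⁺_a)) ∩ (−R⁺_b) = σ_{i_1,i_1▷b}( (w(R⁺_a) ∩ (−R⁺_{i_1▷b})) \ {−α_{i_1,i_1▷b}} ). -/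
open Pointwise

variable {N : Type*} {A : Type*}

/-- The element `(i j)^m ▷ a` for the action of `F₂(N)` on `A`. -/
def altIter (act : N → A → A) (i j : N) (a : A) : ℕ → A
  | 0 => a
  | m + 1 => act i (act j (altIter act i j a m))

/-- The set `Θ(i,j;a)`. -/
def ThetaSet (act : N → A → A) (i j : N) (a : A) : Set A :=
  {x | ∃ m : ℕ, x = altIter act i j a m ∨ x = altIter act j i a m}

/-- The set of `ℕ₀`-linear combinations of elements of `s`. -/
def NSpan (s : Set (N →₀ ℝ)) : Set (N →₀ ℝ) :=
  (AddSubmonoid.closure s : Set (N →₀ ℝ))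

/-- A generalized root system: a transitive action of `F₂(N)` on `A` (axiom (1)),
roots `root a ⊆ ℝ^{(N)}` with simple roots `α n a` forming a basis (axiom (2)),
and maps `σ i a ∈ GL(ℝ^{(N)})`, satisfying axioms (3)-(7). -/
structure GRS (N : Type*) (A : Type*) where
  act : N → A → A
  act_invol : ∀ n a, act n (act n a) = a
  act_trans : ∀ a b : A, ∃ l : List N, l.foldr act a = b
  root : A → Set (N →₀ ℝ)
  α : N → A → N →₀ ℝ
  α_mem : ∀ n a, α n a ∈ root a
  α_indep : ∀ a, LinearIndependent ℝ fun n => α n a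
  α_span : ∀ a, Submodule.span ℝ (Set.range fun n => α n a) = ⊤
  σ : N → A → (N →₀ ℝ) ≃ₗ[ℝ] (N →₀ ℝ)
  ax3 : ∀ a, root a =
    root a ∩ NSpan (Set.range fun n => α n a) ∪ -(root a ∩ NSpan (Set.range fun n => α n a))
  ax4 : ∀ i a, (Set.range fun r : ℝ => r • α i a) ∩ root a = {α i a, -α i a}
  ax5_root : ∀ i a, ⇑(σ i a) '' root a = root (act i a)
  ax5_diag : ∀ i a, σ i a (α i a) = -α i (act i a)
  ax5_off : ∀ i a j, j ≠ i →
    ∃ m : ℕ, σ i a (α j a) = α j (act i a) + (m : ℝ) • α i (act i a)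
  ax6 : ∀ i a v, σ i (act i a) (σ i a v) = v
  ax7 : ∀ a (i j : N), i ≠ j →
    (root a ∩ {β | ∃ p q : ℕ, β = (p : ℝ) • α i a + (q : ℝ) • α j a}).Finite →
    (ThetaSet act i j a).Finite ∧
      (ThetaSet act i j a).ncard ∣
        (root a ∩ {β | ∃ p q : ℕ, β = (p : ℝ) • α i a + (q : ℝ) • α j a}).ncard

/-- The positive roots `R⁺_a`. -/
def GRS.pos (G : GRS N A) (a : A) : Set (N →₀ ℝ) :=
  G.root a ∩ NSpan (Set.range fun n => G.α n a)

/-- The target `i₁ ⋯ i_m ▷ a` of the word `(i₁, …, i_m)` at `a`. -/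
def GRS.target (G : GRS N A) (l : List N) (a : A) : A :=
  l.foldr G.act a

/-- The σ-composite `σ_{i₁,b₁} ∘ ⋯ ∘ σ_{i_m,b_m}` of the word `(i₁, …, i_m)` at `a`. -/
noncomputable def GRS.wmap (G : GRS N A) : List N → A → (N →₀ ℝ) ≃ₗ[ℝ] (N →₀ ℝ)
  | [], _ => LinearEquiv.refl ℝ _
  | i :: l, a => (G.wmap l a).trans (G.σ i (G.target l a))

/-- The length `ℓ` of a word at `a`: the minimal length of a word at `a`
with the same target and the same σ-composite. -/
noncomputable def GRS.len (G : GRS N A) (l : List N) (a : A) : ℕ :=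
  sInf {m | ∃ l' : List N, l'.length = m ∧
    G.target l' a = G.target l a ∧ G.wmap l' a = G.wmap l a}

/-- A word of length `m` at `a` is reduced if `ℓ = m`. -/
def GRS.Reduced (G : GRS N A) (l : List N) (a : A) : Prop :=
  G.len l a = l.length

/-- `m_{i,j;a} = |R_a ∩ (ℕ₀ α_{i,a} + ℕ₀ α_{j,a})|`. -/
noncomputable def GRS.mij (G : GRS N A) (i j : N) (a : A) : ℕ :=
  (G.root a ∩ {β | ∃ p q : ℕ, β = (p : ℝ) • G.α i a + (q : ℝ) • G.α j a}).ncard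

/-- The alternating word `(i₁, …, i_m)` with `i_k = i` for `k` odd (leftmost letter `i`). -/
def altList (i j : N) : ℕ → List N
  | 0 => []
  | m + 1 => i :: altList j i m

/-- The alternating word of length `m` in the letters `i,j` whose rightmost letter is `i`. -/
def altR (i j : N) : ℕ → List N
  | 0 => []
  | m + 1 => altR j i m ++ [i]

/-- `a_m = i_m ⋯ i_1 ▷ a` for the alternating sequence with `i_k = i` for odd `k`. -/
def aIter (act : N → A → A) (i j : N) (a : A) : ℕ → A
  | 0 => a
  | m + 1 => act (if m % 2 = 0 then i else j) (aIter act i j a m)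

/-- The set of real roots `R^{re}_a`. -/
def GRS.reroot (G : GRS N A) (a : A) : Set (N →₀ ℝ) :=
  {β | ∃ (b : A) (l : List N) (n : N), G.target l b = a ∧ β = G.wmap l b (G.α n b)}

/-- The word `C(i,j;a)`: alternating of length `m_{i,j;a} - 1` with leftmost letter `i`. -/
noncomputable def GRS.Cword (G : GRS N A) (i j : N) (a : A) : List N :=
  altList i j (G.mij i j a - 1)

/-!
Write `c := i₁ ▷ b` and `S := w(R⁺_a) ⊆ R_c`; as `w` is injective and `R⁺_a ∩ −R⁺_a = ∅`, `S`
never contains both `β` and `−β`. The reflection `σ_{i₁,c}` sends `α_{i₁,c}` to `−α_{i₁,b}` and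
the other positive roots into `R⁺_b`: it does not change the coordinates off `i₁` in the simple
bases, and `ℝα_{i₁,c} ∩ R_c = {±α_{i₁,c}}`. So the roots of `S` sent into `−R⁺_b` are `α_{i₁,c}`
and the negative roots other than `−α_{i₁,c}`, and only one of `±α_{i₁,c}` lies in `S`.
-/

open Module

namespace GRS

variable (G : GRS N A)

noncomputable def simpleBasis (a : A) : Basis N ℝ (N →₀ ℝ) :=
  Basis.mk (G.α_indep a) (G.α_span a).ge

@[simp]
lemma simpleBasis_apply (a : A) (n : N) : G.simpleBasis a n = G.α n a :=
  Basis.mk_apply _ _ _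

lemma simpleBasis_repr_nonneg {a : A} {x : N →₀ ℝ}
    (hx : x ∈ NSpan (Set.range fun n => G.α n a)) (n : N) :
    0 ≤ (G.simpleBasis a).repr x n := by
  induction hx using AddSubmonoid.closure_induction with
  | mem y hy =>
    obtain ⟨m, rfl⟩ := hy
    dsimp only
    rw [← G.simpleBasis_apply a m, Basis.repr_self]
    exact Finsupp.single_nonneg.2 zero_le_one n
  | zero => simp
  | add y z _ _ hy hz => rw [map_add]; exact add_nonneg hy hz

lemma simpleBasis_repr_σ_of_ne (i : N) (a : A) {j : N} (hj : j ≠ i) (x : N →₀ ℝ) :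
    (G.simpleBasis (G.act i a)).repr (G.σ i a x) j = (G.simpleBasis a).repr x j := by
  have hcoord : ((G.simpleBasis (G.act i a)).coord j).comp (G.σ i a).toLinearMap
      = (G.simpleBasis a).coord j := by
    refine (G.simpleBasis a).ext fun k => ?_
    simp only [LinearMap.comp_apply, LinearEquiv.coe_coe, Basis.coord_apply, simpleBasis_apply]
    rcases eq_or_ne k i with rfl | hk
    · rw [G.ax5_diag, ← simpleBasis_apply, ← simpleBasis_apply, map_neg, Basis.repr_self,
        Basis.repr_self]
      simp [Finsupp.single_eq_of_ne' hj.symm]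
    · obtain ⟨m, hm⟩ := G.ax5_off i a k hk
      rw [hm, ← simpleBasis_apply, ← simpleBasis_apply, ← simpleBasis_apply, map_add, map_smul,
        Basis.repr_self, Basis.repr_self, Basis.repr_self]
      simp [Finsupp.single_eq_of_ne' hj.symm]
  simpa using LinearMap.congr_fun hcoord x

lemma α_mem_pos (n : N) (a : A) : G.α n a ∈ G.pos a :=
  ⟨G.α_mem n a, AddSubmonoid.subset_closure ⟨n, rfl⟩⟩

lemma mem_pos_or_mem_neg_pos {a : A} {β : N →₀ ℝ} (h : β ∈ G.root a) :
    β ∈ G.pos a ∨ β ∈ -G.pos a := by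
  rwa [G.ax3 a] at h

lemma zero_notMem_root [Nonempty N] (a : A) : (0 : N →₀ ℝ) ∉ G.root a := by
  obtain ⟨n⟩ := ‹Nonempty N›
  intro h0
  have h : (0 : N →₀ ℝ) ∈ (Set.range fun r : ℝ => r • G.α n a) ∩ G.root a :=
    ⟨⟨0, zero_smul ℝ _⟩, h0⟩
  rw [G.ax4] at h
  have hne := (G.α_indep a).ne_zero n
  rcases h with h | h
  · exact hne h.symm
  · exact hne (neg_eq_zero.mp h.symm)

lemma neg_notMem_pos [Nonempty N] {a : A} {x : N →₀ ℝ} (hx : x ∈ G.pos a) : -x ∉ G.pos a := by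
  intro hnx
  have hrepr : (G.simpleBasis a).repr x = 0 := by
    ext j
    have h₁ := G.simpleBasis_repr_nonneg hx.2 j
    have h₂ := G.simpleBasis_repr_nonneg hnx.2 j
    rw [map_neg, Finsupp.neg_apply] at h₂
    simp only [Finsupp.coe_zero, Pi.zero_apply]
    linarith
  rw [LinearEquiv.map_eq_zero_iff] at hrepr
  exact G.zero_notMem_root a (hrepr ▸ hx.1)

lemma eq_smul_α_of_repr_eq_zero {a : A} {β : N →₀ ℝ} (i : N)
    (h : ∀ j ≠ i, (G.simpleBasis a).repr β j = 0) :
    β = (G.simpleBasis a).repr β i • G.α i a := by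
  refine (G.simpleBasis a).repr.injective ?_
  rw [← simpleBasis_apply, map_smul, Basis.repr_self, Finsupp.smul_single, smul_eq_mul, mul_one]
  ext j
  rcases eq_or_ne j i with rfl | hj
  · simp
  · rw [h j hj, Finsupp.single_eq_of_ne' hj.symm]

lemma σ_mem_pos (i : N) (a : A) {β : N →₀ ℝ} (hβ : β ∈ G.pos a) (hne : β ≠ G.α i a) :
    G.σ i a β ∈ G.pos (G.act i a) := by
  have hroot : G.σ i a β ∈ G.root (G.act i a) := G.ax5_root i a ▸ ⟨β, hβ.1, rfl⟩
  refine (G.mem_pos_or_mem_neg_pos hroot).resolve_right fun hneg => ?_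
  have hzero : ∀ j ≠ i, (G.simpleBasis a).repr β j = 0 := fun j hj => by
    have h₁ := G.simpleBasis_repr_nonneg hβ.2 j
    have h₂ := G.simpleBasis_repr_nonneg hneg.2 j
    rw [map_neg, Finsupp.neg_apply, G.simpleBasis_repr_σ_of_ne i a hj] at h₂
    linarith
  have hline : β ∈ (Set.range fun r : ℝ => r • G.α i a) ∩ G.root a :=
    ⟨⟨_, (G.eq_smul_α_of_repr_eq_zero i hzero).symm⟩, hβ.1⟩
  rw [G.ax4] at hline
  rcases hline with h | h
  · exact hne h
  · have hcoord := G.simpleBasis_repr_nonneg hβ.2 i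
    rw [Set.mem_singleton_iff.mp h, ← simpleBasis_apply, map_neg, Basis.repr_self] at hcoord
    exact absurd hcoord (by simp)

lemma σ_mem_neg_pos_iff [Nonempty N] (i : N) {a : A} {β : N →₀ ℝ} (hβ : β ∈ G.root a) :
    G.σ i a β ∈ -G.pos (G.act i a) ↔ β = G.α i a ∨ (β ∈ -G.pos a ∧ β ≠ -G.α i a) := by
  rw [Set.mem_neg, Set.mem_neg]
  rcases G.mem_pos_or_mem_neg_pos hβ with hpos | hneg
  · by_cases hα : β = G.α i a
    · subst hα
      simpa [G.ax5_diag] using G.α_mem_pos i _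
    · have hσ := G.σ_mem_pos i a hpos hα
      exact iff_of_false (G.neg_notMem_pos hσ) (by simp [hα, G.neg_notMem_pos hpos])
  · rw [Set.mem_neg] at hneg
    have hα : β ≠ G.α i a := by
      rintro rfl
      exact G.neg_notMem_pos (G.α_mem_pos i a) hneg
    by_cases hnα : β = -G.α i a
    · subst hnα
      refine iff_of_false ?_ (by simp [hα])
      rw [map_neg, neg_neg, G.ax5_diag]
      exact G.neg_notMem_pos (G.α_mem_pos i _)
    · have hσ := G.σ_mem_pos i a hneg (fun h => hnα (neg_eq_iff_eq_neg.mp h))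
      rw [map_neg] at hσ
      simp [hα, hnα, hneg, hσ]

lemma inter_preimage_σ_neg_pos [Nonempty N] (i : N) {a : A} {S : Set (N →₀ ℝ)}
    (hS : S ⊆ G.root a) :
    S ∩ G.σ i a ⁻¹' (-G.pos (G.act i a)) = S ∩ ({G.α i a} ∪ (-G.pos a \ {-G.α i a})) :=
  Set.ext fun _ => and_congr_right fun hβ => G.σ_mem_neg_pos_iff i (hS hβ)

lemma image_wmap_root (l : List N) (a : A) :
    ⇑(G.wmap l a) '' G.root a = G.root (G.target l a) := by
  induction l with
  | nil => exact Set.image_id _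
  | cons i l ih =>
    change ⇑(G.σ i (G.target l a)) ∘ ⇑(G.wmap l a) '' G.root a = _
    rw [Set.image_comp, ih, G.ax5_root]
    rfl

lemma neg_notMem_image_wmap_pos [Nonempty N] (l : List N) (a : A) {β : N →₀ ℝ}
    (hβ : β ∈ ⇑(G.wmap l a) '' G.pos a) : -β ∉ ⇑(G.wmap l a) '' G.pos a := by
  obtain ⟨x, hx, rfl⟩ := hβ
  rintro ⟨y, hy, hyx⟩
  rw [← map_neg, (G.wmap l a).injective.eq_iff] at hyx
  exact G.neg_notMem_pos hx (hyx ▸ hy)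

end GRS

theorem stmt1_general (G : GRS N A) (i₁ : N) (l : List N) (a : A) :
    (G.α i₁ (G.target l a) ∈ ⇑(G.wmap l a) '' G.pos a →
      ⇑(G.σ i₁ (G.target l a)) '' (⇑(G.wmap l a) '' G.pos a) ∩
          -G.pos (G.act i₁ (G.target l a)) =
        ⇑(G.σ i₁ (G.target l a)) '' (⇑(G.wmap l a) '' G.pos a ∩ -G.pos (G.target l a)) ∪
          {-G.α i₁ (G.act i₁ (G.target l a))}) ∧
    (-G.α i₁ (G.target l a) ∈ ⇑(G.wmap l a) '' G.pos a →
      ⇑(G.σ i₁ (G.target l a)) '' (⇑(G.wmap l a) '' G.pos a) ∩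
          -G.pos (G.act i₁ (G.target l a)) =
        ⇑(G.σ i₁ (G.target l a)) ''
          ((⇑(G.wmap l a) '' G.pos a ∩ -G.pos (G.target l a)) \ {-G.α i₁ (G.target l a)})) := by
  have : Nonempty N := ⟨i₁⟩
  set c := G.target l a
  set S := ⇑(G.wmap l a) '' G.pos a
  have hS : S ⊆ G.root c := G.image_wmap_root l a ▸ Set.image_mono fun _ h => h.1
  have hSneg : ∀ β ∈ S, -β ∉ S := fun _ => G.neg_notMem_image_wmap_pos l a
  rw [← Set.image_inter_preimage, G.inter_preimage_σ_neg_pos i₁ hS]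
  refine ⟨fun hα => ?_, fun hnα => ?_⟩
  · rw [← G.ax5_diag, ← Set.image_singleton (f := G.σ i₁ c), ← Set.image_union]
    congr 1
    ext β
    have := hSneg _ hα
    simp only [Set.mem_inter_iff, Set.mem_union, Set.mem_sdiff, Set.mem_singleton_iff]
    grind
  · congr 1
    ext β
    have := hSneg _ hnα
    simp only [Set.mem_inter_iff, Set.mem_union, Set.mem_sdiff, Set.mem_singleton_iff]
    grind

/-- behaviour of `σ_{i₁,i₁▷b}(w(R⁺_a)) ∩ (−R⁺_b)`, where the word is
`(i₁, i₂, …, i_m)` at `a`, `b = i₁⋯i_m ▷ a`, and `w` is the σ-composite of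
`(i₂, …, i_m)` at `a` (so `i₁ ▷ b = target l a` for `l = (i₂,…,i_m)`). -/
theorem stmt1 [Nonempty N] [Nonempty A] (G : GRS N A) (i₁ : N) (l : List N) (a : A) :
    (G.α i₁ (G.target l a) ∈ ⇑(G.wmap l a) '' G.pos a →
      ⇑(G.σ i₁ (G.target l a)) '' (⇑(G.wmap l a) '' G.pos a) ∩
          -G.pos (G.act i₁ (G.target l a)) =
        ⇑(G.σ i₁ (G.target l a)) '' (⇑(G.wmap l a) '' G.pos a ∩ -G.pos (G.target l a)) ∪
          {-G.α i₁ (G.act i₁ (G.target l a))}) ∧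
    (-G.α i₁ (G.target l a) ∈ ⇑(G.wmap l a) '' G.pos a →
      ⇑(G.σ i₁ (G.target l a)) '' (⇑(G.wmap l a) '' G.pos a) ∩
          -G.pos (G.act i₁ (G.target l a)) =
        ⇑(G.σ i₁ (G.target l a)) ''
          ((⇑(G.wmap l a) '' G.pos a ∩ -G.pos (G.target l a)) \ {-G.α i₁ (G.target l a)})) :=
  stmt1_general G i₁ l a
end

section
/- Let N' ⊆ N be a nonempty subset and let A' ⊆ A be an orbit of the subgroup F₂(N') ⊆ F₂(N) acting on A by the restriction of ▷. For a ∈ A' set π'_a := {α_{n,a} : n ∈ N'}, let U_a ⊆ V₀ be the linear span of π'_a, set R'_a := (ℤ-span of π'_a) ∩ R_a, and let φ_a : U_a → ℝ^{(N')} be the linear isomorphism sending α_{n,a} to the standard basis vector e_n for n ∈ N'. Then for every i ∈ N' and a ∈ A' the map σ_{i,a} maps U_a onto U_{i▷a}, and the data consisting of, for each a ∈ A', the roots φ_a(R'_a) ⊆ ℝ^{(N')} with simple roots {e_n : n ∈ N'}, and for each i ∈ N' the maps φ_{i▷a} ∘ σ_{i,a} ∘ φ_a^{−1} ∈ GL(ℝ^{(N')}),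 together with the restricted action of F₂(N') on A', satisfies all the axioms (3)–(7) of a generalized root system. -/
open Pointwise

variable {N : Type*} {A : Type*}

/-!
The restricted data are transported along `embed a : ℝ^(N') → ℝ^(N)`, `v ↦ ∑ vₙ α_{n,a}`, which
is injective and, by `hφ`, equal to `φ_a⁻¹`. Since `σ_{i,a}(α_{j,a}) ∈ α_{j,i▷a} + ℕ₀ α_{i,i▷a}`,
each `σ_{i,a}` with `i ∈ N'` maps the span and the ℤ-span of `π'_a` onto those of `π'_{i▷a}`, so
every axiom of the restricted system is the corresponding axiom of `G` read through `embed`.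
Only positivity needs coordinates: restricting the `π_a`-coordinates to `N'` is a left inverse
of `embed a` that maps `ℕ₀ π_a` into `ℕ₀^(N')`.
-/

theorem Module.Basis.subtypeDomain_repr_mem_closure {ι R M : Type*} [Semiring R]
    [AddCommMonoid M] [Module R M] (B : Module.Basis ι R M) (s : Set ι) {x : M}
    (hx : x ∈ AddSubmonoid.closure (Set.range B)) :
    (B.repr x).subtypeDomain (· ∈ s) ∈
      AddSubmonoid.closure (Set.range fun i : s => Finsupp.single i (1 : R)) := by
  classical
  induction hx using AddSubmonoid.closure_induction with
  | mem _ h =>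
    obtain ⟨j, rfl⟩ := h
    by_cases hj : j ∈ s
    · have h : (B.repr (B j)).subtypeDomain (· ∈ s) = Finsupp.single (⟨j, hj⟩ : s) 1 := by
        ext i
        simp [Finsupp.single_apply, Subtype.ext_iff]
      exact h ▸ AddSubmonoid.subset_closure (Set.mem_range_self _)
    · have h : (B.repr (B j)).subtypeDomain (· ∈ s) = 0 := by
        ext i
        simp only [B.repr_self, Finsupp.subtypeDomain_apply, Finsupp.coe_zero, Pi.zero_apply]
        exact Finsupp.single_eq_of_ne fun h => hj (h ▸ i.2)
      exact h ▸ zero_mem _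
  | zero => simp
  | add _ _ _ _ h₁ h₂ => simpa using add_mem h₁ h₂

namespace GRS

variable (G : GRS N A)

theorem σ_σ_act (i : N) (a : A) (v : N →₀ ℝ) : G.σ i a (G.σ i (G.act i a) v) = v := by
  simpa only [G.act_invol] using G.ax6 i (G.act i a) v

theorem neg_mem_root {a : A} {β : N →₀ ℝ} (h : β ∈ G.root a) : -β ∈ G.root a := by
  rw [G.ax3 a] at h ⊢
  rcases h with h | h
  · exact Or.inr (by simpa [Set.mem_neg] using h)
  · exact Or.inl (by simpa [Set.mem_neg] using h)

noncomputable def basis (a : A) : Module.Basis N ℝ (N →₀ ℝ) :=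
  Module.Basis.mk (G.α_indep a) (G.α_span a).ge

theorem coe_basis (a : A) : ⇑(G.basis a) = fun n => G.α n a :=
  Module.Basis.coe_mk _ _

variable (N' : Set N)

theorem σ_α_mem_closure {i n : N} (hi : i ∈ N') (hn : n ∈ N') (a : A) :
    G.σ i a (G.α n a) ∈ AddSubgroup.closure ((fun n => G.α n (G.act i a)) '' N') := by
  have hgen : ∀ m ∈ N',
      G.α m (G.act i a) ∈ AddSubgroup.closure ((fun n => G.α n (G.act i a)) '' N') :=
    fun m hm => AddSubgroup.subset_closure (Set.mem_image_of_mem _ hm)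
  by_cases h : n = i
  · subst h
    rw [G.ax5_diag]
    exact neg_mem (hgen n hn)
  · obtain ⟨m, hm⟩ := G.ax5_off i a n h
    rw [hm, Nat.cast_smul_eq_nsmul]
    exact add_mem (hgen n hn) (nsmul_mem (hgen i hi) m)

theorem σ_mem_closure {i : N} (hi : i ∈ N') (a : A) {β : N →₀ ℝ}
    (hβ : β ∈ AddSubgroup.closure ((fun n => G.α n a) '' N')) :
    G.σ i a β ∈ AddSubgroup.closure ((fun n => G.α n (G.act i a)) '' N') := by
  induction hβ using AddSubgroup.closure_induction with
  | mem _ h =>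
    obtain ⟨n, hn, rfl⟩ := h
    exact G.σ_α_mem_closure N' hi hn a
  | zero => simp
  | add _ _ _ _ h₁ h₂ => simpa using add_mem h₁ h₂
  | neg _ _ h => simpa using neg_mem h

theorem map_σ_span_le {i : N} (hi : i ∈ N') (a : A) :
    (Submodule.span ℝ ((fun n => G.α n a) '' N')).map (G.σ i a).toLinearMap ≤
      Submodule.span ℝ ((fun n => G.α n (G.act i a)) '' N') := by
  rw [Submodule.map_le_iff_le_comap, Submodule.span_le]
  rintro _ ⟨n, hn, rfl⟩
  exact AddSubgroup.closure_le (K := (Submodule.span ℝ _).toAddSubgroup) |>.mpr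
    Submodule.subset_span (G.σ_α_mem_closure N' hi hn a)

theorem map_σ_span {i : N} (hi : i ∈ N') (a : A) :
    (Submodule.span ℝ ((fun n => G.α n a) '' N')).map (G.σ i a).toLinearMap =
      Submodule.span ℝ ((fun n => G.α n (G.act i a)) '' N') := by
  refine le_antisymm (G.map_σ_span_le N' hi a) fun x hx => ⟨G.σ i (G.act i a) x, ?_, ?_⟩
  · have h := G.map_σ_span_le N' hi (G.act i a)
    rw [G.act_invol] at h
    exact h ⟨x, hx, rfl⟩
  · exact G.σ_σ_act i a x

noncomputable def embed (a : A) : (N' →₀ ℝ) →ₗ[ℝ] (N →₀ ℝ) :=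
  Finsupp.linearCombination ℝ fun n : N' => G.α n a

theorem embed_single (a : A) (n : N') (r : ℝ) :
    G.embed N' a (Finsupp.single n r) = r • G.α n a :=
  Finsupp.linearCombination_single _ _ _

theorem embed_single_one (a : A) (n : N') : G.embed N' a (Finsupp.single n 1) = G.α n a := by
  rw [embed_single, one_smul]

theorem embed_injective (a : A) : Function.Injective (G.embed N' a) :=
  (G.α_indep a).comp _ Subtype.val_injective

theorem subtypeDomain_repr_embed (a : A) (v : N' →₀ ℝ) :
    ((G.basis a).repr (G.embed N' a v)).subtypeDomain (· ∈ N') = v := by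
  classical
  induction v using Finsupp.induction_linear with
  | zero => simp
  | add v w hv hw => simp only [map_add, Finsupp.subtypeDomain_add, hv, hw]
  | single n r =>
    have hα : G.α n a = G.basis a n := by rw [coe_basis]
    ext m
    rw [embed_single, map_smul, hα, (G.basis a).repr_self]
    simp [Finsupp.single_apply, Subtype.ext_iff]

theorem mem_nspan_of_embed_mem_nspan {a : A} {v : N' →₀ ℝ}
    (h : G.embed N' a v ∈ NSpan (Set.range fun n => G.α n a)) :
    v ∈ NSpan (Set.range fun n : N' => Finsupp.single n (1 : ℝ)) := by
  rw [← G.subtypeDomain_repr_embed N' a v]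
  exact (G.basis a).subtypeDomain_repr_mem_closure N' (by rwa [coe_basis])

def latticeRoot (a : A) : Set (N →₀ ℝ) :=
  (AddSubgroup.closure ((fun n => G.α n a) '' N') : Set (N →₀ ℝ)) ∩ G.root a

theorem α_mem_latticeRoot {n : N} (hn : n ∈ N') (a : A) : G.α n a ∈ G.latticeRoot N' a :=
  ⟨AddSubgroup.subset_closure (Set.mem_image_of_mem _ hn), G.α_mem n a⟩

theorem neg_mem_latticeRoot {a : A} {β : N →₀ ℝ} (h : β ∈ G.latticeRoot N' a) :
    -β ∈ G.latticeRoot N' a :=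
  ⟨neg_mem h.1, G.neg_mem_root h.2⟩

theorem σ_mem_latticeRoot {i : N} (hi : i ∈ N') {a : A} {β : N →₀ ℝ}
    (h : β ∈ G.latticeRoot N' a) : G.σ i a β ∈ G.latticeRoot N' (G.act i a) :=
  ⟨G.σ_mem_closure N' hi a h.1, G.ax5_root i a ▸ Set.mem_image_of_mem _ h.2⟩

theorem latticeRoot_inter_rank_two {i j : N} (hi : i ∈ N') (hj : j ∈ N') (a : A) :
    G.latticeRoot N' a ∩ {β | ∃ p q : ℕ, β = (p : ℝ) • G.α i a + (q : ℝ) • G.α j a} =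
      G.root a ∩ {β | ∃ p q : ℕ, β = (p : ℝ) • G.α i a + (q : ℝ) • G.α j a} := by
  refine Set.Subset.antisymm (Set.inter_subset_inter_left _ Set.inter_subset_right) ?_
  rintro _ ⟨hβ, p, q, rfl⟩
  refine ⟨⟨?_, hβ⟩, p, q, rfl⟩
  rw [Nat.cast_smul_eq_nsmul, Nat.cast_smul_eq_nsmul]
  exact add_mem (nsmul_mem (AddSubgroup.subset_closure (Set.mem_image_of_mem _ hi)) p)
    (nsmul_mem (AddSubgroup.subset_closure (Set.mem_image_of_mem _ hj)) q)

section Restrict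

variable {N'} {A' : Set A} (hclosed : ∀ i ∈ N', ∀ a ∈ A', G.act i a ∈ A')
  (φ : ∀ a : A', Submodule.span ℝ ((fun n => G.α n (a : A)) '' N') ≃ₗ[ℝ] (N' →₀ ℝ))

def restrictAct (i : N') (b : A') : A' :=
  ⟨G.act i b, hclosed i i.2 b b.2⟩

theorem coe_foldr_restrictAct (l : List N') (b : A') :
    ((l.foldr (G.restrictAct hclosed) b : A') : A) = (l.map Subtype.val).foldr G.act b := by
  induction l with
  | nil => rfl
  | cons i l ih => simp only [List.foldr_cons, List.map_cons, restrictAct, ih]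

theorem restrictAct_restrictAct (i : N') (b : A') :
    G.restrictAct hclosed i (G.restrictAct hclosed i b) = b :=
  Subtype.ext (G.act_invol i b)

theorem exists_foldr_restrictAct_eq
    (horbit : ∀ a ∈ A', ∀ b ∈ A', ∃ l : List N, (∀ i ∈ l, i ∈ N') ∧ l.foldr G.act a = b)
    (a b : A') : ∃ l : List N', l.foldr (G.restrictAct hclosed) a = b := by
  obtain ⟨l, hl, hfold⟩ := horbit a a.2 b b.2
  lift l to List N' using hl
  exact ⟨l, Subtype.ext ((G.coe_foldr_restrictAct hclosed l a).trans hfold)⟩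

theorem coe_altIter_restrictAct (i j : N') (b : A') (m : ℕ) :
    ((altIter (G.restrictAct hclosed) i j b m : A') : A) = altIter G.act i j b m := by
  induction m with
  | zero => rfl
  | succ m ih => simp only [altIter, restrictAct, ih]

theorem image_val_thetaSet_restrictAct (i j : N') (b : A') :
    Subtype.val '' ThetaSet (G.restrictAct hclosed) i j b = ThetaSet G.act i j b := by
  ext x
  simp only [ThetaSet, Set.mem_image, Set.mem_ofPred_eq]
  constructor
  · rintro ⟨y, ⟨m, rfl | rfl⟩, rfl⟩
    exacts [⟨m, Or.inl (G.coe_altIter_restrictAct hclosed i j b m)⟩,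
      ⟨m, Or.inr (G.coe_altIter_restrictAct hclosed j i b m)⟩]
  · rintro ⟨m, rfl | rfl⟩
    exacts [⟨_, ⟨m, Or.inl rfl⟩, G.coe_altIter_restrictAct hclosed i j b m⟩,
      ⟨_, ⟨m, Or.inr rfl⟩, G.coe_altIter_restrictAct hclosed j i b m⟩]

noncomputable def restrictσ (i : N') (b : A') : (N' →₀ ℝ) ≃ₗ[ℝ] (N' →₀ ℝ) :=
  (φ b).symm ≪≫ₗ
    (G.σ i b).ofSubmodules _
      (Submodule.span ℝ ((fun n => G.α n (G.restrictAct hclosed i b : A)) '' N'))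
      (G.map_σ_span N' i.2 b) ≪≫ₗ
    φ (G.restrictAct hclosed i b)

theorem coe_symm_restrictσ (i : N') (b : A') (v : N' →₀ ℝ) :
    ((φ (G.restrictAct hclosed i b)).symm (G.restrictσ hclosed φ i b v) : N →₀ ℝ) =
      G.σ i b ((φ b).symm v) := by
  simp only [restrictσ, LinearEquiv.trans_apply, LinearEquiv.symm_apply_apply]
  rfl

def restrictRoot (b : A') : Set (N' →₀ ℝ) :=
  {v | ((φ b).symm v : N →₀ ℝ) ∈ G.latticeRoot N' b}

theorem neg_mem_restrictRoot {b : A'} {v : N' →₀ ℝ} (h : v ∈ G.restrictRoot φ b) :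
    -v ∈ G.restrictRoot φ b := by
  simpa only [restrictRoot, Set.mem_ofPred_eq, map_neg, Submodule.coe_neg]
    using G.neg_mem_latticeRoot N' h

theorem restrictσ_mem_restrictRoot (i : N') {b : A'} {v : N' →₀ ℝ}
    (h : v ∈ G.restrictRoot φ b) :
    G.restrictσ hclosed φ i b v ∈ G.restrictRoot φ (G.restrictAct hclosed i b) := by
  simp only [restrictRoot, Set.mem_ofPred_eq, coe_symm_restrictσ]
  exact G.σ_mem_latticeRoot N' i.2 h

theorem restrictσ_restrictσ (i : N') (b : A') (v : N' →₀ ℝ) :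
    G.restrictσ hclosed φ i (G.restrictAct hclosed i b) (G.restrictσ hclosed φ i b v) = v := by
  refine (φ (G.restrictAct hclosed i (G.restrictAct hclosed i b))).symm.injective
    (Subtype.ext ?_)
  rw [coe_symm_restrictσ, coe_symm_restrictσ, restrictAct_restrictAct]
  exact G.ax6 i b _

theorem image_restrictσ_restrictRoot (i : N') (b : A') :
    G.restrictσ hclosed φ i b '' G.restrictRoot φ b =
      G.restrictRoot φ (G.restrictAct hclosed i b) := by
  refine Set.Subset.antisymm (Set.image_subset_iff.mpr fun v => G.restrictσ_mem_restrictRoot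
    hclosed φ i) fun w hw => ⟨G.restrictσ hclosed φ i (G.restrictAct hclosed i b) w, ?_, ?_⟩
  · have h := G.restrictσ_mem_restrictRoot hclosed φ i hw
    rwa [restrictAct_restrictAct] at h
  · have h := G.restrictσ_restrictσ hclosed φ i (G.restrictAct hclosed i b) w
    rwa [restrictAct_restrictAct] at h

variable {φ} (hφ : ∀ (a : A') (n : N')
  (h : G.α (n : N) (a : A) ∈ Submodule.span ℝ ((fun n => G.α n (a : A)) '' N')),
  φ a ⟨G.α (n : N) (a : A), h⟩ = Finsupp.single n 1)
include hφ

theorem coe_symm_eq_embed (b : A') (v : N' →₀ ℝ) :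
    ((φ b).symm v : N →₀ ℝ) = G.embed N' b v := by
  induction v using Finsupp.induction_linear with
  | zero => simp
  | add v w hv hw => simp only [map_add, Submodule.coe_add, hv, hw]
  | single n r =>
    have hα : (φ b).symm (Finsupp.single n 1) = ⟨G.α n b, _⟩ :=
      (φ b).symm_apply_eq.mpr (hφ b n (Submodule.subset_span (Set.mem_image_of_mem _ n.2))).symm
    rw [← Finsupp.smul_single_one, map_smul, map_smul, Submodule.coe_smul, hα, embed_single_one]

theorem restrictRoot_eq_preimage (b : A') :
    G.restrictRoot φ b = G.embed N' b ⁻¹' G.latticeRoot N' b := by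
  ext v
  simp only [restrictRoot, Set.mem_ofPred_eq, Set.mem_preimage, G.coe_symm_eq_embed hφ]

theorem embed_restrictσ (i : N') (b : A') (v : N' →₀ ℝ) :
    G.embed N' (G.act i b) (G.restrictσ hclosed φ i b v) = G.σ i b (G.embed N' b v) := by
  rw [← G.coe_symm_eq_embed hφ b]
  exact (G.coe_symm_eq_embed hφ (G.restrictAct hclosed i b) _).symm.trans
    (G.coe_symm_restrictσ hclosed φ i b v)

theorem single_mem_restrictRoot (n : N') (b : A') :
    Finsupp.single n 1 ∈ G.restrictRoot φ b := by
  rw [G.restrictRoot_eq_preimage hφ, Set.mem_preimage, embed_single_one]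
  exact G.α_mem_latticeRoot N' n.2 b

theorem restrictRoot_eq_union_neg (b : A') :
    G.restrictRoot φ b =
      G.restrictRoot φ b ∩ NSpan (Set.range fun n : N' => Finsupp.single n 1) ∪
        -(G.restrictRoot φ b ∩ NSpan (Set.range fun n : N' => Finsupp.single n 1)) := by
  refine Set.Subset.antisymm (fun v hv => ?_) (Set.union_subset Set.inter_subset_left
    fun v hv => by simpa using G.neg_mem_restrictRoot φ hv.1)
  have hroot : G.embed N' b v ∈ G.root b := (G.restrictRoot_eq_preimage hφ b ▸ hv).2
  rw [G.ax3] at hroot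
  rcases hroot with h | h
  · exact Or.inl ⟨hv, G.mem_nspan_of_embed_mem_nspan N' h.2⟩
  · refine Or.inr ⟨G.neg_mem_restrictRoot φ hv, G.mem_nspan_of_embed_mem_nspan N' (a := b) ?_⟩
    rw [map_neg]
    exact h.2

theorem range_smul_single_inter_restrictRoot (i : N') (b : A') :
    (Set.range fun r : ℝ => r • Finsupp.single i (1 : ℝ)) ∩ G.restrictRoot φ b =
      {Finsupp.single i 1, -Finsupp.single i 1} := by
  ext v
  constructor
  · rintro ⟨⟨r, rfl⟩, hv⟩
    have hr : r • G.α i b ∈ ({G.α i b, -G.α i b} : Set (N →₀ ℝ)) := by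
      rw [← G.ax4]
      refine ⟨⟨r, rfl⟩, ?_⟩
      have h := (G.restrictRoot_eq_preimage hφ b ▸ hv).2
      rwa [map_smul, embed_single_one] at h
    simp only [Set.mem_insert_iff, Set.mem_singleton_iff] at hr ⊢
    rcases hr with h | h
    · exact Or.inl (G.embed_injective N' b (by rw [map_smul, embed_single_one, h]))
    · exact Or.inr (G.embed_injective N' b (by rw [map_smul, map_neg, embed_single_one, h]))
  · rintro (rfl | rfl)
    · exact ⟨⟨1, one_smul _ _⟩, G.single_mem_restrictRoot hφ i b⟩
    · exact ⟨⟨-1, neg_one_smul _ _⟩, G.neg_mem_restrictRoot φ (G.single_mem_restrictRoot hφ i b)⟩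

theorem restrictσ_single_self (i : N') (b : A') :
    G.restrictσ hclosed φ i b (Finsupp.single i 1) = -Finsupp.single i 1 := by
  apply G.embed_injective N' (G.act i b)
  rw [G.embed_restrictσ hclosed hφ, embed_single_one, G.ax5_diag, map_neg, embed_single_one]

theorem exists_restrictσ_single_of_ne (i : N') (b : A') {j : N'} (hji : j ≠ i) :
    ∃ m : ℕ, G.restrictσ hclosed φ i b (Finsupp.single j 1) =
      Finsupp.single j 1 + (m : ℝ) • Finsupp.single i 1 := by
  obtain ⟨m, hm⟩ := G.ax5_off i b j (Subtype.coe_injective.ne hji)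
  refine ⟨m, G.embed_injective N' (G.act i b) ?_⟩
  rw [G.embed_restrictσ hclosed hφ, embed_single_one, hm, map_add, map_smul, embed_single_one,
    embed_single_one]

theorem image_embed_restrictRoot_inter_rank_two (i j : N') (b : A') :
    G.embed N' b '' (G.restrictRoot φ b ∩
        {v | ∃ p q : ℕ, v = (p : ℝ) • Finsupp.single i 1 + (q : ℝ) • Finsupp.single j 1}) =
      G.root b ∩ {β | ∃ p q : ℕ, β = (p : ℝ) • G.α i b + (q : ℝ) • G.α j b} := by
  rw [G.restrictRoot_eq_preimage hφ, Set.image_preimage_inter,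
    ← G.latticeRoot_inter_rank_two N' i.2 j.2]
  congr 1
  ext β
  simp [embed_single, eq_comm]

theorem thetaSet_restrictAct_finite_and_ncard_dvd (b : A') (i j : N') (hij : i ≠ j)
    (hfin : (G.restrictRoot φ b ∩ {v | ∃ p q : ℕ,
      v = (p : ℝ) • Finsupp.single i 1 + (q : ℝ) • Finsupp.single j 1}).Finite) :
    (ThetaSet (G.restrictAct hclosed) i j b).Finite ∧
      (ThetaSet (G.restrictAct hclosed) i j b).ncard ∣ (G.restrictRoot φ b ∩ {v | ∃ p q : ℕ,
        v = (p : ℝ) • Finsupp.single i 1 + (q : ℝ) • Finsupp.single j 1}).ncard := by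
  have hR := G.image_embed_restrictRoot_inter_rank_two hφ i j b
  obtain ⟨hΘ, hdvd⟩ := G.ax7 b i j (Subtype.coe_injective.ne hij) (hR ▸ hfin.image _)
  rw [← G.image_val_thetaSet_restrictAct hclosed] at hΘ hdvd
  rw [← hR, Set.ncard_image_of_injective _ (G.embed_injective N' b),
    Set.ncard_image_of_injective _ Subtype.val_injective] at hdvd
  exact ⟨hΘ.of_finite_image Subtype.val_injective.injOn, hdvd⟩

noncomputable def restrict
    (horbit : ∀ a ∈ A', ∀ b ∈ A', ∃ l : List N, (∀ i ∈ l, i ∈ N') ∧ l.foldr G.act a = b) :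
    GRS N' A' where
  act := G.restrictAct hclosed
  act_invol := G.restrictAct_restrictAct hclosed
  act_trans := G.exists_foldr_restrictAct_eq hclosed horbit
  root := G.restrictRoot φ
  α n _ := Finsupp.single n 1
  α_mem := G.single_mem_restrictRoot hφ
  α_indep _ := Finsupp.linearIndependent_single_one (R := ℝ) (ι := N')
  α_span _ := by simpa using (Finsupp.basisSingleOne (R := ℝ) (ι := N')).span_eq
  σ := G.restrictσ hclosed φ
  ax3 := G.restrictRoot_eq_union_neg hφ
  ax4 := G.range_smul_single_inter_restrictRoot hφ
  ax5_root := G.image_restrictσ_restrictRoot hclosed φ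
  ax5_diag := G.restrictσ_single_self hclosed hφ
  ax5_off := G.exists_restrictσ_single_of_ne hclosed hφ
  ax6 := G.restrictσ_restrictσ hclosed φ
  ax7 := G.thetaSet_restrictAct_finite_and_ncard_dvd hclosed hφ

end Restrict

end GRS

theorem stmt3_general (G : GRS N A)
    (N' : Set N) (A' : Set A)
    (hclosed : ∀ i ∈ N', ∀ a ∈ A', G.act i a ∈ A')
    (horbit : ∀ a ∈ A', ∀ b ∈ A',
      ∃ l : List N, (∀ i ∈ l, i ∈ N') ∧ l.foldr G.act a = b)
    (φ : ∀ a : A', (Submodule.span ℝ ((fun n => G.α n (a : A)) '' N')) ≃ₗ[ℝ]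
      (N' →₀ ℝ))
    (hφ : ∀ (a : A') (n : N')
      (h : G.α (n : N) (a : A) ∈ Submodule.span ℝ ((fun n => G.α n (a : A)) '' N')),
      φ a ⟨G.α (n : N) (a : A), h⟩ = Finsupp.single n 1) :
    (∀ i ∈ N', ∀ a ∈ A',
      ⇑(G.σ i a) '' (Submodule.span ℝ ((fun n => G.α n a) '' N') : Set (N →₀ ℝ)) =
        (Submodule.span ℝ ((fun n => G.α n (G.act i a)) '' N') : Set (N →₀ ℝ))) ∧
    ∃ G' : GRS N' A',
      (∀ (n : N') (b : A'), (G'.act n b : A) = G.act (n : N) (b : A)) ∧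
      (∀ (n : N') (b : A'), G'.α n b = Finsupp.single n 1) ∧
      (∀ b : A', G'.root b = {v : N' →₀ ℝ |
        ((φ b).symm v : N →₀ ℝ) ∈
          (AddSubgroup.closure ((fun n => G.α n (b : A)) '' N') : Set (N →₀ ℝ)) ∩
            G.root (b : A)}) ∧
      (∀ (i : N') (b c : A'), (c : A) = G.act (i : N) (b : A) → ∀ v : N' →₀ ℝ,
        ((φ c).symm (G'.σ i b v) : N →₀ ℝ) = G.σ (i : N) (b : A) ((φ b).symm v)) := by
  refine ⟨fun i hi a _ => ?_, G.restrict hclosed hφ horbit, fun _ _ => rfl, fun _ _ => rfl,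
    fun _ => rfl, fun i b c hc v => ?_⟩
  · rw [← LinearEquiv.coe_toLinearMap, ← Submodule.map_coe, G.map_σ_span N' hi a]
  · obtain rfl : c = G.restrictAct hclosed i b := Subtype.ext hc
    exact G.coe_symm_restrictσ hclosed φ i b v

/-- restriction to a sub-root-system: for a nonempty subset `N' ⊆ N` and an
orbit `A' ⊆ A` of `F₂(N')`, each `σ_{i,a}` (`i ∈ N'`, `a ∈ A'`) maps the span `U_a` of
`π'_a` onto `U_{i▷a}`, and the restricted data (transported to `ℝ^{(N')}` by the
isomorphisms `φ_a` sending `α_{n,a}` to `e_n`) forms a generalized root system. -/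
theorem stmt3 [Nonempty N] [Nonempty A] (G : GRS N A)
    (N' : Set N) (hN' : N'.Nonempty) (A' : Set A) (hA' : A'.Nonempty)
    (hclosed : ∀ i ∈ N', ∀ a ∈ A', G.act i a ∈ A')
    (horbit : ∀ a ∈ A', ∀ b ∈ A',
      ∃ l : List N, (∀ i ∈ l, i ∈ N') ∧ l.foldr G.act a = b)
    (φ : ∀ a : A', (Submodule.span ℝ ((fun n => G.α n (a : A)) '' N')) ≃ₗ[ℝ]
      (N' →₀ ℝ))
    (hφ : ∀ (a : A') (n : N')
      (h : G.α (n : N) (a : A) ∈ Submodule.span ℝ ((fun n => G.α n (a : A)) '' N')),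
      φ a ⟨G.α (n : N) (a : A), h⟩ = Finsupp.single n 1) :
    (∀ i ∈ N', ∀ a ∈ A',
      ⇑(G.σ i a) '' (Submodule.span ℝ ((fun n => G.α n a) '' N') : Set (N →₀ ℝ)) =
        (Submodule.span ℝ ((fun n => G.α n (G.act i a)) '' N') : Set (N →₀ ℝ))) ∧
    ∃ G' : GRS N' A',
      (∀ (n : N') (b : A'), (G'.act n b : A) = G.act (n : N) (b : A)) ∧
      (∀ (n : N') (b : A'), G'.α n b = Finsupp.single n 1) ∧
      (∀ b : A', G'.root b = {v : N' →₀ ℝ |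
        ((φ b).symm v : N →₀ ℝ) ∈
          (AddSubgroup.closure ((fun n => G.α n (b : A)) '' N') : Set (N →₀ ℝ)) ∩
            G.root (b : A)}) ∧
      (∀ (i : N') (b c : A'), (c : A) = G.act (i : N) (b : A) → ∀ v : N' →₀ ℝ,
        ((φ c).symm (G'.σ i b v) : N →₀ ℝ) = G.σ (i : N) (b : A) ((φ b).symm v)) :=
  stmt3_general G N' A' hclosed horbit φ hφ
end
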